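/- Completeness direction of the modal characterisation for stability-respecting branching bisimilarity: if two processes of an LTS satisfy exactly the same modal formulas from the class O_b^s, then they are stability-respecting branching bisimilar; in fact, the relation 'satisfies the same O_b^s-formulas' is itself a stability-respecting branching bisimulation. -/
import Mathlib


variable {P Act : Type*}

/-- ε-reachability: reflexive-transitive closure of τ-transitions. -/
def Eps (Tr : P → Act → P → Prop) (τ : Act) : P → P → Prop :=
  Relation.ReflTransGen (fun a b => Tr a τ b)

/-- B is a branching bisimulation. -/
def IsBranchingBisim (Tr : P → Act → P → Prop) (τ : Act) (B : P → P → Prop) : Prop :=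
  Symmetric B ∧ ∀ p q α p', B p q → Tr p α p' →
    (α = τ ∧ B p' q) ∨ ∃ q' q'', Eps Tr τ q q' ∧ Tr q' α q'' ∧ B p q' ∧ B p' q''

/-- p is stable: no outgoing τ-transition. -/
def Stable (Tr : P → Act → P → Prop) (τ : Act) (p : P) : Prop :=
  ∀ p', ¬ Tr p τ p'

/-- B is stability-respecting. -/
def StabRespecting (Tr : P → Act → P → Prop) (τ : Act) (B : P → P → Prop) : Prop :=
  ∀ p q, B p q → Stable Tr τ p →
    ∃ q', Eps Tr τ q q' ∧ Stable Tr τ q' ∧ B p q'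

/-- p is divergent: admits an infinite τ-sequence. -/
def Divergent (Tr : P → Act → P → Prop) (τ : Act) (p : P) : Prop :=
  ∃ f : ℕ → P, f 0 = p ∧ ∀ k, Tr (f k) τ (f (k + 1))

/-- Condition (D): B is divergence-preserving. -/
def DivPreserving (Tr : P → Act → P → Prop) (τ : Act) (B : P → P → Prop) : Prop :=
  ∀ p q (f : ℕ → P), B p q → f 0 = p → (∀ k, Tr (f k) τ (f (k + 1))) →
    (∀ k, B (f k) q) →
    ∃ g : ℕ → P, g 0 = q ∧ (∀ l, Tr (g l) τ (g (l + 1))) ∧ ∀ k l, B (f k) (g l)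

/-- B is weakly divergence-preserving. -/
def WeakDivPreserving (Tr : P → Act → P → Prop) (τ : Act) (B : P → P → Prop) : Prop :=
  ∀ p q, B p q → Divergent Tr τ p → Divergent Tr τ q

/-- B is a strong bisimulation. -/
def IsStrongBisim (Tr : P → Act → P → Prop) (B : P → P → Prop) : Prop :=
  Symmetric B ∧ ∀ p q α p', B p q → Tr p α p' → ∃ q', Tr q α q' ∧ B p' q'

mutual
/-- The class O_b^s of modal formulas. -/
inductive FB (Act : Type) (τ : Act) : Type 1 where
  | conj : (I : Type) → (I → FB Act τ) → FB Act τ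
  | neg : FB Act τ → FB Act τ
  /-- ⟨ε⟩(φ₁ ∧ ⟨τ̂⟩φ₂) -/
  | epsTau : FB Act τ → FB Act τ → FB Act τ
  /-- ⟨ε⟩(φ₁ ∧ ⟨a⟩φ₂) with a ∈ A, i.e. a ≠ τ -/
  | epsAct : (a : Act) → a ≠ τ → FB Act τ → FB Act τ → FB Act τ
  /-- ⟨ε⟩(¬⟨τ⟩⊤ ∧ φ̄) with φ̄ ∈ O_rb^s -/
  | epsStable : FRB Act τ → FB Act τ

/-- The class O_rb^s of modal formulas. -/
inductive FRB (Act : Type) (τ : Act) : Type 1 where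
  | conj : (I : Type) → (I → FRB Act τ) → FRB Act τ
  | neg : FRB Act τ → FRB Act τ
  /-- ⟨α⟩φ with α ∈ A ∪ {τ} and φ ∈ O_b^s -/
  | diam : Act → FB Act τ → FRB Act τ
  | ofB : FB Act τ → FRB Act τ
end

mutual
/-- Satisfaction of O_b^s formulas. -/
def SatB {P Act : Type} (Tr : P → Act → P → Prop) (τ : Act) :
    P → FB Act τ → Prop
  | p, .conj _ f => ∀ i, SatB Tr τ p (f i)
  | p, .neg φ => ¬ SatB Tr τ p φ
  | p, .epsTau φ₁ φ₂ => ∃ p', Eps Tr τ p p' ∧ SatB Tr τ p' φ₁ ∧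
      (SatB Tr τ p' φ₂ ∨ ∃ p'', Tr p' τ p'' ∧ SatB Tr τ p'' φ₂)
  | p, .epsAct a _ φ₁ φ₂ => ∃ p', Eps Tr τ p p' ∧ SatB Tr τ p' φ₁ ∧
      ∃ p'', Tr p' a p'' ∧ SatB Tr τ p'' φ₂
  | p, .epsStable φ => ∃ p', Eps Tr τ p p' ∧ (∀ p'', ¬ Tr p' τ p'') ∧
      SatRB Tr τ p' φ

/-- Satisfaction of O_rb^s formulas. -/
def SatRB {P Act : Type} (Tr : P → Act → P → Prop) (τ : Act) :
    P → FRB Act τ → Prop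
  | p, .conj _ f => ∀ i, SatRB Tr τ p (f i)
  | p, .neg φ => ¬ SatRB Tr τ p φ
  | p, .diam α φ => ∃ p', Tr p α p' ∧ SatB Tr τ p' φ
  | p, .ofB φ => SatB Tr τ p φ
end


section Aux
variable {P' Act' : Type} (Tr : P' → Act' → P' → Prop) (τ : Act')

/-- 'satisfies the same formulas' -/
def MEq (p q : P') : Prop := ∀ φ : FB Act' τ, SatB Tr τ p φ ↔ SatB Tr τ q φ

lemma meq_symm {p q : P'} (h : MEq Tr τ p q) : MEq Tr τ q p := fun φ => (h φ).symm

lemma meq_trans {p q r : P'} (h : MEq Tr τ p q) (h' : MEq Tr τ q r) : MEq Tr τ p r :=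
  fun φ => (h φ).trans (h' φ)

lemma distinguish {p q : P'} (h : ¬ MEq Tr τ p q) :
    ∃ φ : FB Act' τ, SatB Tr τ p φ ∧ ¬ SatB Tr τ q φ := by
  rw [MEq] at h
  push_neg at h
  obtain ⟨φ, hφ⟩ := h
  rcases hφ with ⟨hp, hq⟩ | ⟨hp, hq⟩
  · exact ⟨φ, hp, hq⟩
  · refine ⟨.neg φ, ?_, ?_⟩
    · simpa [SatB] using hp
    · simp only [SatB, not_not]
      exact hq

/-- big conjunction of formulas distinguishing p from all non-equivalent states -/
noncomputable def bigConj (p : P') : FB Act' τ :=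
  .conj {q : P' // ¬ MEq Tr τ p q} (fun x => Classical.choose (distinguish Tr τ x.2))

lemma bigConj_self (p : P') : SatB Tr τ p (bigConj Tr τ p) := by
  simp only [bigConj, SatB]
  exact fun i => (Classical.choose_spec (distinguish Tr τ i.2)).1

lemma bigConj_forces {p q : P'} (h : SatB Tr τ q (bigConj Tr τ p)) : MEq Tr τ p q := by
  by_contra hne
  simp only [bigConj, SatB] at h
  exact (Classical.choose_spec (distinguish Tr τ hne)).2 (h ⟨q, hne⟩)

end Aux

/-- completeness of the modal characterisation: the relation
'satisfies the same O_b^s formulas' is a stability-respecting branching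
bisimulation; hence processes satisfying the same O_b^s formulas are
stability-respecting branching bisimilar. -/
theorem stmt9 {P Act : Type} (Tr : P → Act → P → Prop) (τ : Act) :
    (IsBranchingBisim Tr τ
        (fun p q => ∀ φ : FB Act τ, SatB Tr τ p φ ↔ SatB Tr τ q φ) ∧
      StabRespecting Tr τ
        (fun p q => ∀ φ : FB Act τ, SatB Tr τ p φ ↔ SatB Tr τ q φ)) ∧
    (∀ p q : P, (∀ φ : FB Act τ, SatB Tr τ p φ ↔ SatB Tr τ q φ) →
      ∃ B, IsBranchingBisim Tr τ B ∧ StabRespecting Tr τ B ∧ B p q) := by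
  have key : IsBranchingBisim Tr τ (MEq Tr τ) ∧ StabRespecting Tr τ (MEq Tr τ) := by
    constructor
    · constructor
      · exact fun p q h => meq_symm Tr τ h
      · intro p q α p' hpq hstep
        by_cases hα : α = τ
        · rw [hα] at hstep ⊢
          by_cases hpq' : MEq Tr τ p' q
          · exact Or.inl ⟨rfl, hpq'⟩
          · -- use formula ⟨ε⟩(Φ ∧ ⟨τ̂⟩Ψ)
            have hsatp : SatB Tr τ p (.epsTau (bigConj Tr τ p) (bigConj Tr τ p')) :=
              ⟨p, Relation.ReflTransGen.refl, bigConj_self Tr τ p,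
                Or.inr ⟨p', hstep, bigConj_self Tr τ p'⟩⟩
            have hsatq := (hpq _).mp hsatp
            obtain ⟨q₁, hq₁, hΦ, hΨ⟩ := hsatq
            have hpq₁ : MEq Tr τ p q₁ := bigConj_forces Tr τ hΦ
            rcases hΨ with hΨ | ⟨q₂, hstep₂, hΨ⟩
            · -- stutter case: p' ~ q₁ ~ p ~ q, contradiction
              have : MEq Tr τ p' q :=
                meq_trans Tr τ (meq_trans Tr τ (bigConj_forces Tr τ hΨ)
                  (meq_symm Tr τ hpq₁)) hpq
              exact absurd this hpq'
            · exact Or.inr ⟨q₁, q₂, hq₁, hstep₂, hpq₁, bigConj_forces Tr τ hΨ⟩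
        · -- visible action
          have hsatp : SatB Tr τ p (.epsAct α hα (bigConj Tr τ p) (bigConj Tr τ p')) :=
            ⟨p, Relation.ReflTransGen.refl, bigConj_self Tr τ p,
              p', hstep, bigConj_self Tr τ p'⟩
          have hsatq := (hpq _).mp hsatp
          obtain ⟨q₁, hq₁, hΦ, q₂, hstep₂, hΨ⟩ := hsatq
          exact Or.inr ⟨q₁, q₂, hq₁, hstep₂, bigConj_forces Tr τ hΦ,
            bigConj_forces Tr τ hΨ⟩
    · intro p q hpq hstab
      have hsatp : SatB Tr τ p (.epsStable (.ofB (bigConj Tr τ p))) :=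
        ⟨p, Relation.ReflTransGen.refl, hstab, bigConj_self Tr τ p⟩
      have hsatq := (hpq _).mp hsatp
      obtain ⟨q', hq', hstab', hΦ⟩ := hsatq
      exact ⟨q', hq', hstab', bigConj_forces Tr τ (hΦ : SatB Tr τ q' (bigConj Tr τ p))⟩
  exact ⟨key, fun p q h => ⟨MEq Tr τ, key.1, key.2, h⟩⟩
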